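/- If f is μ_f-strongly convex, S is a random matrix with E[S] = I and μ_D = λ_min(E[SᵀS]), then f̃(x) ≥ f(x) + ((μ_D − 1)μ_f / 2)‖x − s‖² for all x. -/

import Mathlib

/-!
Write `v = x - s`. The random vector `S v` has mean `v`, so `Z = S v - v` is centred and
`s + S v = x + Z`. Integrating the strong-convexity minorant
`f (x + Z) ≥ f x + ⟪g x, Z⟫ + μ_f/2 ‖Z‖²` kills the linear term, and
`E‖Z‖² = E‖S v‖² - ‖v‖² ≥ (μ_D - 1) ‖v‖²`.
-/

open MeasureTheory Matrix
open scoped RealInnerProductSpace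

section

variable {Ω : Type*} [MeasurableSpace Ω] {μ : Measure Ω}

namespace Matrix

variable {m n : Type*} [Fintype n] [DecidableEq n]

lemma toEuclideanLin_apply_apply (M : Matrix m n ℝ) (v : EuclideanSpace ℝ n) (i : m) :
    toEuclideanLin M v i = ∑ j, M i j * v j := by
  simp [toLpLin_apply, mulVec, dotProduct]

variable [Fintype m] {S : Ω → Matrix m n ℝ}

lemma integrable_toEuclideanLin_apply (hS : ∀ i j, Integrable (fun ω => S ω i j) μ)
    (v : EuclideanSpace ℝ n) : Integrable (fun ω => toEuclideanLin (S ω) v) μ := by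
  refine integrable_piLp_iff.2 fun i => ?_
  simp only [toEuclideanLin_apply_apply]
  exact integrable_finsetSum _ fun j _ => (hS i j).mul_const _

lemma integral_toEuclideanLin_apply (hS : ∀ i j, Integrable (fun ω => S ω i j) μ)
    (v : EuclideanSpace ℝ n) :
    ∫ ω, toEuclideanLin (S ω) v ∂μ = toEuclideanLin (of fun i j => ∫ ω, S ω i j ∂μ) v := by
  ext i
  rw [eval_integral_piLp (integrable_piLp_iff.1 (integrable_toEuclideanLin_apply hS v)) i]
  simp only [toEuclideanLin_apply_apply, of_apply]
  rw [integral_finsetSum _ fun j _ => (hS i j).mul_const _]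
  simp only [integral_mul_const]

end Matrix

variable {E : Type*} [NormedAddCommGroup E] [InnerProductSpace ℝ E]

lemma integrable_norm_sub_const_sq [IsFiniteMeasure μ] {Y : Ω → E} (hY : Integrable Y μ)
    (hY2 : Integrable (fun ω => ‖Y ω‖ ^ 2) μ) (m : E) :
    Integrable (fun ω => ‖Y ω - m‖ ^ 2) μ := by
  simp_rw [norm_sub_sq_real]
  exact (hY2.sub ((hY.inner_const m).const_mul 2)).add (integrable_const _)

variable [CompleteSpace E] [IsProbabilityMeasure μ]

lemma integral_norm_sub_integral_sq {Y : Ω → E} (hY : Integrable Y μ)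
    (hY2 : Integrable (fun ω => ‖Y ω‖ ^ 2) μ) :
    ∫ ω, ‖Y ω - ∫ ω', Y ω' ∂μ‖ ^ 2 ∂μ = ∫ ω, ‖Y ω‖ ^ 2 ∂μ - ‖∫ ω, Y ω ∂μ‖ ^ 2 := by
  set m := ∫ ω, Y ω ∂μ
  have hI : Integrable (fun ω => 2 * ⟪m, Y ω⟫) μ := (hY.const_inner m).const_mul 2
  have hI' : Integrable (fun ω => ‖Y ω‖ ^ 2 - 2 * ⟪m, Y ω⟫) μ := hY2.sub hI
  simp_rw [norm_sub_sq_real, real_inner_comm m]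
  rw [integral_add hI' (integrable_const _), integral_sub hY2 hI, integral_const_mul,
    integral_inner hY, real_inner_self_eq_norm_sq, integral_const, probReal_univ, one_smul]
  ring

lemma le_integral_comp_add_of_quadratic_minorant {f : E → ℝ} {x a : E} {c : ℝ}
    (hf : ∀ h, f x + ⟪a, h⟫ + c / 2 * ‖h‖ ^ 2 ≤ f (x + h)) {Z : Ω → E}
    (hZ : Integrable Z μ) (hZ_mean : ∫ ω, Z ω ∂μ = 0) (hZ2 : Integrable (fun ω => ‖Z ω‖ ^ 2) μ)
    (hfZ : Integrable (fun ω => f (x + Z ω)) μ) :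
    f x + c / 2 * ∫ ω, ‖Z ω‖ ^ 2 ∂μ ≤ ∫ ω, f (x + Z ω) ∂μ := by
  have hI : Integrable (fun ω => f x + ⟪a, Z ω⟫) μ := (integrable_const _).add (hZ.const_inner a)
  have hI' : Integrable (fun ω => c / 2 * ‖Z ω‖ ^ 2) μ := hZ2.const_mul _
  calc f x + c / 2 * ∫ ω, ‖Z ω‖ ^ 2 ∂μ
      = ∫ ω, f x + ⟪a, Z ω⟫ + c / 2 * ‖Z ω‖ ^ 2 ∂μ := by
        rw [integral_add hI hI', integral_add (integrable_const _) (hZ.const_inner a),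
          integral_inner hZ, hZ_mean, integral_const_mul]
        simp
    _ ≤ ∫ ω, f (x + Z ω) ∂μ := integral_mono (hI.add hI') hfZ fun ω => hf (Z ω)

end

/-- If `f` is `μ_f`-strongly convex (with gradient `g`), `S` a random
matrix with `E[S] = I` and `λ_min(E[SᵀS]) ≥ μ_D` (quadratic-form encoding), then
`f̃(x) = E[f(s + S(x-s))] ≥ f(x) + ((μ_D - 1) μ_f / 2) ‖x - s‖²` for all `x`. -/
theorem mast_tilde_lower {d : ℕ} {Ω : Type*} [MeasurableSpace Ω]
    (μ : Measure Ω) [IsProbabilityMeasure μ]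
    (f : EuclideanSpace ℝ (Fin d) → ℝ)
    (g : EuclideanSpace ℝ (Fin d) → EuclideanSpace ℝ (Fin d))
    (μf μD : ℝ) (hμf : 0 < μf)
    (hconv : ∀ x h : EuclideanSpace ℝ (Fin d),
      f (x + h) ≥ f x + ⟪g x, h⟫ + μf / 2 * ‖h‖ ^ 2)
    (S : Ω → Matrix (Fin d) (Fin d) ℝ)
    (hS_int : ∀ i j, Integrable (fun ω => S ω i j) μ)
    (hS_mean : ∀ i j, (∫ ω, S ω i j ∂μ) = (1 : Matrix (Fin d) (Fin d) ℝ) i j)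
    (hSS_int : ∀ v : EuclideanSpace ℝ (Fin d),
      Integrable (fun ω => ‖Matrix.toEuclideanLin (S ω) v‖ ^ 2) μ)
    (hμD : ∀ v : EuclideanSpace ℝ (Fin d),
      μD * ‖v‖ ^ 2 ≤ ∫ ω, ‖Matrix.toEuclideanLin (S ω) v‖ ^ 2 ∂μ)
    (s : EuclideanSpace ℝ (Fin d))
    (hf_int : ∀ x : EuclideanSpace ℝ (Fin d),
      Integrable (fun ω => f (s + Matrix.toEuclideanLin (S ω) (x - s))) μ) :
    ∀ x : EuclideanSpace ℝ (Fin d),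
      (∫ ω, f (s + Matrix.toEuclideanLin (S ω) (x - s)) ∂μ) ≥
        f x + (μD - 1) * μf / 2 * ‖x - s‖ ^ 2 := by
  intro x
  set v := x - s
  set Y := fun ω => toEuclideanLin (S ω) v
  have hY : Integrable Y μ := integrable_toEuclideanLin_apply hS_int v
  have hY_mean : ∫ ω, Y ω ∂μ = v := by
    rw [integral_toEuclideanLin_apply hS_int, show (of fun i j => ∫ ω, S ω i j ∂μ) = 1 from
      ext hS_mean, toLpLin_one, LinearMap.id_apply]
  have hshift : ∀ ω, s + Y ω = x + (Y ω - v) := fun ω => by simp only [v]; abel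
  have hZ_mean : ∫ ω, (Y ω - v) ∂μ = 0 := by
    rw [integral_sub hY (integrable_const v), hY_mean, integral_const, probReal_univ, one_smul,
      sub_self]
  have hvar : ∫ ω, ‖Y ω - v‖ ^ 2 ∂μ = ∫ ω, ‖Y ω‖ ^ 2 ∂μ - ‖v‖ ^ 2 := by
    simpa only [hY_mean] using integral_norm_sub_integral_sq hY (hSS_int v)
  have hlower := le_integral_comp_add_of_quadratic_minorant (fun h => (hconv x h).le)
    (Z := fun ω => Y ω - v) (hY.sub (integrable_const v)) hZ_mean
    (integrable_norm_sub_const_sq hY (hSS_int v) v) (by simp only [← hshift]; exact hf_int x)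
  calc f x + (μD - 1) * μf / 2 * ‖v‖ ^ 2
      ≤ f x + μf / 2 * (∫ ω, ‖Y ω‖ ^ 2 ∂μ - ‖v‖ ^ 2) := by nlinarith [hμD v]
    _ ≤ ∫ ω, f (s + Y ω) ∂μ := by simpa only [hvar, hshift] using hlower
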